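/- Let k₀ ∈ L²([0,1]²) be a real stochastic kernel and L₀ the associated integral operator on L²([0,1];ℂ); assume L₀ satisfies the mixing condition (A1) (‖L₀ⁿ g‖₂ → 0 for every g ∈ L²([0,1];ℂ) with ∫ g dm = 0). Let λ₀ ∈ ℂ and e, ê ∈ L²([0,1];ℂ) satisfy L₀ e = λ₀ e and L₀ᵀ ê = λ₀ ê, where L₀ᵀ is the integral operator with kernel (x,y) ↦ k₀(y,x). Define E(x,y) := (Re ê(x)·Re e(y) + Im ê(x)·Im e(y))·Re λ₀ + (Im ê(x)·Re e(y) − Re ê(x)·Im e(y))·Im λ₀. Fix 0 < l < 1 and assume there exists Ξ' ⊆ Ξ(F_l) with m(Ξ') > 0 such that ∫_{F_l^y} E⁺(x,y) dx > 0 and ∫_{F_l^y} E⁻(x,y) dx > 0 for every y ∈ Ξ'. Define M(x,y) := 𝟙_{F_l}(x,y) · ( (1/m(F_l^y)) ∫_{F_l^y} E(z,y) dz − E(x,y) ) and α := ‖M‖_{L²([0,1]²)}. Then α > 0, k̇ := M/α belongs to V_ker ∩ S_{k₀,l} with ‖k̇‖_{L²([0,1]²)} = 1, and k̇ is the unique minimizer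 of the functional k ↦ ∫₀¹∫₀¹ k(x,y) E(x,y) dx dy over the set {k ∈ V_ker ∩ S_{k₀,l} : ‖k‖_{L²([0,1]²)} = 1}. -/

import Mathlib

/-!
On the subspace `V` of `L²` kernels with vanishing fibre integrals `∫ k(x,y) dx` and
support in `F = F_l`, the objective `k ↦ ∫∫ k E` equals `k ↦ -⟪k, M⟫`: on `F` the function `M`
differs from `-E` by a function of `y` alone, which integrates to zero against every `k ∈ V`.
Since `M ∈ V` (the fibre averages are in `L²` by Jensen's inequality on each fibre), the
Cauchy–Schwarz inequality and its equality case show that `M / ‖M‖` is the unique minimiser on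
the unit sphere of `V`, as soon as `M ≠ 0`. And `M ≠ 0`: on a set of `y` of positive measure
`E(·, y)` takes both signs on `F^y`, so it is not a.e. equal to its average there.
Replacing `k₀` by a measurable representative changes `F` only by a null set.
-/

open MeasureTheory

/-- Lebesgue measure restricted to the unit interval `[0,1]`. -/
noncomputable def μ01 : Measure ℝ := volume.restrict (Set.Icc (0 : ℝ) 1)

/-- Two-dimensional Lebesgue measure restricted to the unit square `[0,1]²`. -/
noncomputable def ν01 : Measure (ℝ × ℝ) := μ01.prod μ01

/-- The region `F_l ⊆ [0,1]²` where the kernel `k₀` is at least `l`. -/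
def Fset (k₀ : ℝ × ℝ → ℝ) (l : ℝ) : Set (ℝ × ℝ) :=
  {p | p ∈ Set.Icc (0 : ℝ) 1 ×ˢ Set.Icc (0 : ℝ) 1 ∧ l ≤ k₀ p}

/-- The `y`-section `F_l^y = {x ∈ [0,1] : (x,y) ∈ F_l}`. -/
def Fsec (k₀ : ℝ × ℝ → ℝ) (l : ℝ) (y : ℝ) : Set ℝ :=
  {x | (x, y) ∈ Fset k₀ l}

/-- `Ξ(F_l)`: the set of `y ∈ [0,1]` whose section `F_l^y` has positive measure. -/
def XiF (k₀ : ℝ × ℝ → ℝ) (l : ℝ) : Set ℝ :=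
  {y | y ∈ Set.Icc (0 : ℝ) 1 ∧ 0 < μ01 (Fsec k₀ l y)}

/-- The function
`E(x,y) = (Re ê(x) Re e(y) + Im ê(x) Im e(y)) Re λ₀ + (Im ê(x) Re e(y) − Re ê(x) Im e(y)) Im λ₀`. -/
def Efun (lam : ℂ) (e ehat : ℝ → ℂ) : ℝ × ℝ → ℝ := fun p =>
  ((ehat p.1).re * (e p.2).re + (ehat p.1).im * (e p.2).im) * lam.re +
  ((ehat p.1).im * (e p.2).re - (ehat p.1).re * (e p.2).im) * lam.im

/-- The (un-normalized) optimal kernel perturbation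
`M(x,y) = 𝟙_{F_l}(x,y) ((1/m(F_l^y)) ∫_{F_l^y} E(z,y) dz − E(x,y))`. -/
noncomputable def MoptE (k₀ : ℝ × ℝ → ℝ) (l : ℝ) (E : ℝ × ℝ → ℝ) : ℝ × ℝ → ℝ :=
  (Fset k₀ l).indicator fun p =>
    (∫ z in Fsec k₀ l p.2, E (z, p.2) ∂μ01) / (μ01 (Fsec k₀ l p.2)).toReal - E p

/-- The feasible set `{k ∈ V_ker ∩ S_{k₀,l} : ‖k‖₂ = 1}`. -/
def feasSet (k₀ : ℝ × ℝ → ℝ) (l : ℝ) : Set (Lp ℝ 2 ν01) :=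
  {k : Lp ℝ 2 ν01 |
    (∀ᵐ y ∂μ01, ∫ x, k (x, y) ∂μ01 = 0) ∧
    (∀ᵐ p ∂ν01, p ∉ Fset k₀ l → k p = 0) ∧ ‖k‖ = 1}

/-- The objective `k ↦ ∫∫ k(x,y) E(x,y) dx dy`. -/
noncomputable def JobjE (E : ℝ × ℝ → ℝ) (k : Lp ℝ 2 ν01) : ℝ :=
  ∫ y, (∫ x, k (x, y) * E (x, y) ∂μ01) ∂μ01

open scoped RealInnerProductSpace

section UnitSphere

variable {E : Type*} [NormedAddCommGroup E] [InnerProductSpace ℝ E] {S : Set E} {J : E → ℝ}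
  {m : E}

lemma ne_zero_and_eq_neg_norm_of_eq_neg_inner (hS : ∀ k ∈ S, ‖k‖ = 1) (hJ : ∀ k ∈ S, J k = -⟪k, m⟫)
    (hmS : ‖m‖⁻¹ • m ∈ S) : m ≠ 0 ∧ J (‖m‖⁻¹ • m) = -‖m‖ := by
  have hm : m ≠ 0 := by
    rintro rfl
    simpa using hS _ hmS
  refine ⟨hm, ?_⟩
  rw [hJ _ hmS, real_inner_smul_left, real_inner_self_eq_norm_sq]
  field_simp

lemma isMinOn_inv_norm_smul_of_eq_neg_inner (hS : ∀ k ∈ S, ‖k‖ = 1)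
    (hJ : ∀ k ∈ S, J k = -⟪k, m⟫) (hmS : ‖m‖⁻¹ • m ∈ S) : IsMinOn J S (‖m‖⁻¹ • m) := by
  intro k hk
  show J _ ≤ J k
  rw [(ne_zero_and_eq_neg_norm_of_eq_neg_inner hS hJ hmS).2, hJ k hk, neg_le_neg_iff]
  simpa [hS k hk] using real_inner_le_norm k m

lemma eq_inv_norm_smul_of_isMinOn_of_eq_neg_inner (hS : ∀ k ∈ S, ‖k‖ = 1)
    (hJ : ∀ k ∈ S, J k = -⟪k, m⟫) (hmS : ‖m‖⁻¹ • m ∈ S) {k : E} (hk : k ∈ S)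
    (hmin : IsMinOn J S k) : k = ‖m‖⁻¹ • m := by
  obtain ⟨hm, hJm⟩ := ne_zero_and_eq_neg_norm_of_eq_neg_inner hS hJ hmS
  have hle : ‖m‖ ≤ ⟪k, m⟫ := by
    have : J k ≤ J (‖m‖⁻¹ • m) := hmin hmS
    rw [hJm, hJ k hk] at this
    linarith
  have hparallel : ‖m‖ • k = ‖k‖ • m := inner_eq_norm_mul_iff_real.1 <|
    le_antisymm (real_inner_le_norm k m) (by rwa [hS k hk, one_mul])
  rw [hS k hk, one_smul] at hparallel
  calc k = ‖m‖⁻¹ • (‖m‖ • k) := by rw [smul_smul, inv_mul_cancel₀ (norm_ne_zero_iff.2 hm), one_smul]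
    _ = ‖m‖⁻¹ • m := by rw [hparallel]

end UnitSphere

section Fiber

variable {α β : Type*} [MeasurableSpace α] [MeasurableSpace β]

noncomputable def fiberAverage (μ : Measure α) (F : Set (α × β)) (f : α × β → ℝ) (y : β) : ℝ :=
  ⨍ x in {x | (x, y) ∈ F}, f (x, y) ∂μ

noncomputable def fiberCentered (μ : Measure α) (F : Set (α × β)) (f : α × β → ℝ) :
    α × β → ℝ :=
  F.indicator fun p => fiberAverage μ F f p.2 - f p

variable {μ : Measure α} {ν : Measure β} {F G : Set (α × β)} {f : α × β → ℝ}

lemma measurableSet_fiber (hF : MeasurableSet F) (y : β) : MeasurableSet {x | (x, y) ∈ F} :=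
  hF.preimage measurable_prodMk_right

lemma integral_indicator_fiber (hF : MeasurableSet F) (g : α × β → ℝ) (y : β) :
    ∫ x, F.indicator g (x, y) ∂μ = ∫ x in {x | (x, y) ∈ F}, g (x, y) ∂μ := by
  rw [← integral_indicator (measurableSet_fiber hF y)]
  rfl

lemma ae_ae_of_ae_prod_swap [SFinite μ] [SFinite ν] {P : α × β → Prop}
    (h : ∀ᵐ p ∂μ.prod ν, P p) : ∀ᵐ y ∂ν, ∀ᵐ x ∂μ, P (x, y) :=
  Measure.ae_ae_of_ae_prod (Measure.measurePreserving_swap.quasiMeasurePreserving.ae h)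

lemma ae_integral_fiber_congr [SFinite μ] [SFinite ν] {g h : α × β → ℝ}
    (hgh : g =ᵐ[μ.prod ν] h) : ∀ᵐ y ∂ν, ∫ x, g (x, y) ∂μ = ∫ x, h (x, y) ∂μ := by
  filter_upwards [ae_ae_of_ae_prod_swap hgh] with y hy
  exact integral_congr_ae hy

lemma ae_fiber_ae_eq [SFinite μ] [SFinite ν] (h : F =ᵐ[μ.prod ν] G) :
    ∀ᵐ y ∂ν, {x | (x, y) ∈ F} =ᵐ[μ] {x | (x, y) ∈ G} :=
  ae_ae_of_ae_prod_swap h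

lemma MeasureTheory.MemLp.ae_memLp_two_fiber [SFinite μ] [SFinite ν] (hf : MemLp f 2 (μ.prod ν)) :
    ∀ᵐ y ∂ν, MemLp (fun x => f (x, y)) 2 μ := by
  filter_upwards [hf.1.prod_swap.prodMk_left,
    ((memLp_two_iff_integrable_sq hf.1).1 hf).prod_left_ae] with y hsm hint
  exact (memLp_two_iff_integrable_sq hsm).2 hint

lemma aestronglyMeasurable_fiberAverage [SFinite μ] [SFinite ν] (hF : MeasurableSet F)
    (hf : AEStronglyMeasurable f (μ.prod ν)) : AEStronglyMeasurable (fiberAverage μ F f) ν := by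
  have hint : AEStronglyMeasurable (fun y => ∫ x in {x | (x, y) ∈ F}, f (x, y) ∂μ) ν := by
    simp_rw [← integral_indicator_fiber hF f]
    exact (hf.indicator hF).prod_swap.integral_prod_right'
  have hmeas : Measurable fun y => μ.real {x | (x, y) ∈ F} :=
    (measurable_measure_prodMk_right hF).ennreal_toReal
  unfold fiberAverage
  simp_rw [setAverage_eq, smul_eq_mul]
  exact hmeas.inv.aestronglyMeasurable.mul hint

lemma measureReal_mul_sq_setAverage_le [IsFiniteMeasure μ] {g : α → ℝ} (hg : MemLp g 2 μ)
    (s : Set α) : μ.real s * (⨍ x in s, g x ∂μ) ^ 2 ≤ ∫ x in s, g x ^ 2 ∂μ := by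
  rcases eq_or_ne (μ s) 0 with hs | hs
  · simp [Measure.real, hs]
  have hjensen : (⨍ x in s, g x ∂μ) ^ 2 ≤ ⨍ x in s, g x ^ 2 ∂μ :=
    (even_two.convexOn_pow).map_set_average_le (continuousOn_pow 2) isClosed_univ hs
      (measure_ne_top μ s) (ae_of_all _ fun _ => trivial) (hg.integrable one_le_two).integrableOn
      ((memLp_two_iff_integrable_sq hg.1).1 hg).integrableOn
  calc μ.real s * (⨍ x in s, g x ∂μ) ^ 2 ≤ μ.real s * ⨍ x in s, g x ^ 2 ∂μ := by gcongr
    _ = ∫ x in s, g x ^ 2 ∂μ := measure_smul_setAverage _ (measure_ne_top μ s)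

lemma memLp_indicator_fiberAverage [IsFiniteMeasure μ] [IsFiniteMeasure ν]
    (hF : MeasurableSet F) (hf : MemLp f 2 (μ.prod ν)) :
    MemLp (F.indicator fun p => fiberAverage μ F f p.2) 2 (μ.prod ν) := by
  have hsm : AEStronglyMeasurable (F.indicator fun p => fiberAverage μ F f p.2) (μ.prod ν) :=
    ((aestronglyMeasurable_fiberAverage hF hf.1).comp_quasiMeasurePreserving
      Measure.quasiMeasurePreserving_snd).indicator hF
  have hsq : ∀ y, (fun x => (F.indicator (fun p => fiberAverage μ F f p.2) (x, y)) ^ 2) =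
      {x | (x, y) ∈ F}.indicator fun _ => fiberAverage μ F f y ^ 2 := by
    intro y
    ext x
    by_cases hx : (x, y) ∈ F <;> simp [Set.indicator, hx]
  have hsm2 : AEStronglyMeasurable
      (fun p => (F.indicator (fun p => fiberAverage μ F f p.2) p) ^ 2) (μ.prod ν) := hsm.pow 2
  rw [memLp_two_iff_integrable_sq hsm, integrable_prod_iff' hsm2]
  refine ⟨ae_of_all _ fun y => ?_, ?_⟩
  · rw [hsq y]
    exact (integrable_const _).indicator (measurableSet_fiber hF y)
  refine ((memLp_two_iff_integrable_sq hf.1).1 hf).integral_prod_right.mono'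
    hsm2.norm.prod_swap.integral_prod_right' ?_
  filter_upwards [hf.ae_memLp_two_fiber] with y hy
  simp_rw [Real.norm_eq_abs, abs_pow, sq_abs]
  rw [hsq y, integral_indicator (measurableSet_fiber hF y), setIntegral_const, smul_eq_mul,
    abs_of_nonneg (by positivity)]
  calc μ.real {x | (x, y) ∈ F} * fiberAverage μ F f y ^ 2
      ≤ ∫ x in {x | (x, y) ∈ F}, f (x, y) ^ 2 ∂μ :=
        measureReal_mul_sq_setAverage_le hy _
    _ ≤ ∫ x, f (x, y) ^ 2 ∂μ :=
        setIntegral_le_integral ((memLp_two_iff_integrable_sq hy.1).1 hy)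
          (ae_of_all _ fun _ => sq_nonneg _)

lemma memLp_fiberCentered [IsFiniteMeasure μ] [IsFiniteMeasure ν] (hF : MeasurableSet F)
    (hf : MemLp f 2 (μ.prod ν)) : MemLp (fiberCentered μ F f) 2 (μ.prod ν) := by
  rw [fiberCentered, Set.indicator_sub]
  exact (memLp_indicator_fiberAverage hF hf).sub (hf.indicator hF)

lemma ae_integral_fiberCentered_eq_zero [IsFiniteMeasure μ] [SFinite ν] (hF : MeasurableSet F)
    (hf : Integrable f (μ.prod ν)) : ∀ᵐ y ∂ν, ∫ x, fiberCentered μ F f (x, y) ∂μ = 0 := by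
  filter_upwards [hf.prod_left_ae] with y hy
  rw [fiberCentered, integral_indicator_fiber hF]
  rw [integral_sub (integrable_const (fiberAverage μ F f y)) hy.integrableOn, setIntegral_const,
    fiberAverage, measure_smul_setAverage _ (measure_ne_top _ _), sub_self]

lemma not_ae_eq_const_of_setIntegral_max_pos {g : α → ℝ} {s : Set α} (c : ℝ)
    (hpos : 0 < ∫ x in s, max (g x) 0 ∂μ) (hneg : 0 < ∫ x in s, max (-g x) 0 ∂μ) :
    ¬ ∀ᵐ x ∂μ.restrict s, g x = c := by
  intro hc
  rw [integral_congr_ae (hc.mono fun x hx => by rw [hx]), setIntegral_const,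
    smul_eq_mul] at hpos hneg
  rcases le_total c 0 with hc0 | hc0
  · simp [max_eq_right hc0] at hpos
  · simp [max_eq_right (neg_nonpos.2 hc0)] at hneg

lemma fiberCentered_congr_ae [SFinite μ] [SFinite ν] (h : F =ᵐ[μ.prod ν] G) :
    fiberCentered μ F f =ᵐ[μ.prod ν] fiberCentered μ G f := by
  have havg : ∀ᵐ y ∂ν, fiberAverage μ F f y = fiberAverage μ G f y :=
    (ae_fiber_ae_eq h).mono fun y hy => setAverage_congr hy
  filter_upwards [h, Measure.quasiMeasurePreserving_snd.ae havg] with p hp hpy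
  have hp' : p ∈ F ↔ p ∈ G := iff_of_eq hp
  by_cases hpF : p ∈ F
  · rw [fiberCentered, fiberCentered, Set.indicator_of_mem hpF, Set.indicator_of_mem (hp'.1 hpF),
      hpy]
  · rw [fiberCentered, fiberCentered, Set.indicator_of_notMem hpF,
      Set.indicator_of_notMem (mt hp'.2 hpF)]

section Finite

variable [IsFiniteMeasure μ] [IsFiniteMeasure ν]

-- `V_ker ∩ S_{k₀,l}` of the paper, with `F` in place of `F_l`.
variable (μ ν) in
noncomputable def centeredKernelsOn (F : Set (α × β)) : Submodule ℝ (Lp ℝ 2 (μ.prod ν)) where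
  carrier := {k | (∀ᵐ y ∂ν, ∫ x, k (x, y) ∂μ = 0) ∧ ∀ᵐ p ∂μ.prod ν, p ∉ F → k p = 0}
  add_mem' := by
    rintro k₁ k₂ ⟨h₁, hF₁⟩ ⟨h₂, hF₂⟩
    have hint : ∀ k : Lp ℝ 2 (μ.prod ν), ∀ᵐ y ∂ν, Integrable (fun x => k (x, y)) μ :=
      fun k => ((Lp.memLp k).integrable one_le_two).prod_left_ae
    refine ⟨?_, ?_⟩
    · filter_upwards [ae_integral_fiber_congr (Lp.coeFn_add k₁ k₂), h₁, h₂, hint k₁, hint k₂]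
        with y hy hy₁ hy₂ hi₁ hi₂
      rw [hy, Pi.add_def, integral_add hi₁ hi₂, hy₁, hy₂, add_zero]
    · filter_upwards [Lp.coeFn_add k₁ k₂, hF₁, hF₂] with p hp hp₁ hp₂ hpF
      rw [hp, Pi.add_apply, hp₁ hpF, hp₂ hpF, add_zero]
  zero_mem' := by
    refine ⟨?_, ?_⟩
    · filter_upwards [ae_integral_fiber_congr (Lp.coeFn_zero ℝ 2 (μ.prod ν))] with y hy
      rw [hy, Pi.zero_def, integral_zero]
    · filter_upwards [Lp.coeFn_zero ℝ 2 (μ.prod ν)] with p hp _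
      rw [hp, Pi.zero_apply]
  smul_mem' := by
    rintro c k ⟨h₀, hF₀⟩
    refine ⟨?_, ?_⟩
    · filter_upwards [ae_integral_fiber_congr (Lp.coeFn_smul c k), h₀] with y hy hy₀
      rw [hy, Pi.smul_def, integral_smul, hy₀, smul_zero]
    · filter_upwards [Lp.coeFn_smul c k, hF₀] with p hp hp₀ hpF
      rw [hp, Pi.smul_apply, hp₀ hpF, smul_zero]

lemma centeredKernelsOn_congr_ae (h : F =ᵐ[μ.prod ν] G) :
    centeredKernelsOn μ ν F = centeredKernelsOn μ ν G := by
  ext k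
  refine and_congr_right' (Filter.eventually_congr (h.mono fun p hp => ?_))
  rw [(iff_of_eq hp : p ∈ F ↔ p ∈ G)]

lemma toLp_fiberCentered_mem_centeredKernelsOn (hF : MeasurableSet F)
    (hf : MemLp f 2 (μ.prod ν)) :
    (memLp_fiberCentered hF hf).toLp _ ∈ centeredKernelsOn μ ν F := by
  have hcoe := (memLp_fiberCentered hF hf).coeFn_toLp
  refine ⟨?_, ?_⟩
  · filter_upwards [ae_integral_fiber_congr hcoe,
      ae_integral_fiberCentered_eq_zero hF (hf.integrable one_le_two)] with y h₁ h₂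
    rw [h₁, h₂]
  · filter_upwards [hcoe] with p hp hpF
    rw [hp, fiberCentered, Set.indicator_of_notMem hpF]

lemma toLp_fiberCentered_ne_zero (hF : MeasurableSet F) (hf : MemLp f 2 (μ.prod ν))
    (h : ∃ᵐ y ∂ν, 0 < ∫ x in {x | (x, y) ∈ F}, max (f (x, y)) 0 ∂μ ∧
      0 < ∫ x in {x | (x, y) ∈ F}, max (-f (x, y)) 0 ∂μ) :
    (memLp_fiberCentered hF hf).toLp _ ≠ 0 := by
  intro h0
  replace h0 : fiberCentered μ F f =ᵐ[μ.prod ν] 0 :=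
    (memLp_fiberCentered hF hf).coeFn_toLp.symm.trans (Lp.eq_zero_iff_ae_eq_zero.1 h0)
  obtain ⟨y, hy0, hpos, hneg⟩ := ((ae_ae_of_ae_prod_swap h0).and_frequently h).exists
  refine not_ae_eq_const_of_setIntegral_max_pos (fiberAverage μ F f y) hpos hneg ?_
  rw [ae_restrict_iff' (measurableSet_fiber hF y)]
  filter_upwards [hy0] with x hx hxF
  rw [Pi.zero_apply, fiberCentered, Set.indicator_of_mem hxF, sub_eq_zero] at hx
  exact hx.symm

lemma integral_integral_mul_eq_neg_integral_mul_fiberCentered (hF : MeasurableSet F)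
    (hf : MemLp f 2 (μ.prod ν)) {k : α × β → ℝ} (hk : MemLp k 2 (μ.prod ν))
    (hk₀ : ∀ᵐ y ∂ν, ∫ x, k (x, y) ∂μ = 0) (hkF : ∀ᵐ p ∂μ.prod ν, p ∉ F → k p = 0) :
    ∫ y, ∫ x, k (x, y) * f (x, y) ∂μ ∂ν = -∫ p, k p * fiberCentered μ F f p ∂μ.prod ν := by
  have hkM : Integrable (fun p => k p * fiberCentered μ F f p) (μ.prod ν) :=
    hk.integrable_mul (memLp_fiberCentered hF hf)
  have hsplit : ∀ᵐ p ∂μ.prod ν,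
      k p * f p = fiberAverage μ F f p.2 * k p - k p * fiberCentered μ F f p := by
    filter_upwards [hkF] with p hp
    by_cases hpF : p ∈ F
    · rw [fiberCentered, Set.indicator_of_mem hpF]
      ring
    · rw [fiberCentered, Set.indicator_of_notMem hpF, hp hpF]
      ring
  rw [integral_prod_symm _ hkM, ← integral_neg]
  refine integral_congr_ae ?_
  filter_upwards [ae_ae_of_ae_prod_swap hsplit, hk₀, (hk.integrable one_le_two).prod_left_ae,
    hkM.prod_left_ae] with y hy hy₀ hky hkMy
  rw [integral_congr_ae hy, integral_sub (hky.const_mul _) hkMy, integral_const_mul, hy₀,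
    mul_zero, zero_sub]

lemma integral_integral_mul_eq_neg_inner (hF : MeasurableSet F) (hf : MemLp f 2 (μ.prod ν))
    {k : Lp ℝ 2 (μ.prod ν)} (hk : k ∈ centeredKernelsOn μ ν F) :
    ∫ y, ∫ x, k (x, y) * f (x, y) ∂μ ∂ν = -⟪k, (memLp_fiberCentered hF hf).toLp _⟫ := by
  rw [integral_integral_mul_eq_neg_integral_mul_fiberCentered hF hf (Lp.memLp k) hk.1 hk.2,
    L2.inner_def]
  congr 1
  refine integral_congr_ae ?_
  filter_upwards [(memLp_fiberCentered hF hf).coeFn_toLp] with p hp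
  rw [hp, real_inner_eq_re_inner]
  simp [mul_comm]

end Finite

end Fiber

instance : IsFiniteMeasure μ01 := by
  unfold μ01
  infer_instance

lemma MeasureTheory.MemLp.mul_prod_two {α β : Type*} [MeasurableSpace α] [MeasurableSpace β]
    {μ : Measure α} {ν : Measure β} [SFinite ν] {g : α → ℝ} {h : β → ℝ} (hg : MemLp g 2 μ)
    (hh : MemLp h 2 ν) : MemLp (fun p => g p.1 * h p.2) 2 (μ.prod ν) := by
  have hsm : AEStronglyMeasurable (fun p : α × β => g p.1 * h p.2) (μ.prod ν) :=
    (hg.1.comp_quasiMeasurePreserving Measure.quasiMeasurePreserving_fst).mul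
      (hh.1.comp_quasiMeasurePreserving Measure.quasiMeasurePreserving_snd)
  refine (memLp_two_iff_integrable_sq hsm).2 ?_
  simp_rw [mul_pow]
  exact ((memLp_two_iff_integrable_sq hg.1).1 hg).mul_prod ((memLp_two_iff_integrable_sq hh.1).1 hh)

lemma memLp_Efun (lam : ℂ) {e ehat : ℝ → ℂ} (he : MemLp e 2 μ01) (hehat : MemLp ehat 2 μ01) :
    MemLp (Efun lam e ehat) 2 ν01 :=
  (((hehat.re.mul_prod_two he.re).add (hehat.im.mul_prod_two he.im)).mul_const lam.re).add
    (((hehat.im.mul_prod_two he.re).sub (hehat.re.mul_prod_two he.im)).mul_const lam.im)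

lemma measurableSet_Fset {k : ℝ × ℝ → ℝ} (hk : Measurable k) (l : ℝ) :
    MeasurableSet (Fset k l) :=
  (measurableSet_Icc.prod measurableSet_Icc).inter (measurableSet_le measurable_const hk)

lemma Fset_ae_eq {k₀ k₁ : ℝ × ℝ → ℝ} (h : k₀ =ᵐ[ν01] k₁) (l : ℝ) :
    Fset k₀ l =ᵐ[ν01] Fset k₁ l := by
  filter_upwards [h] with p hp
  show (_ ∧ _) = (_ ∧ _)
  rw [hp]

lemma MoptE_eq_fiberCentered (k : ℝ × ℝ → ℝ) (l : ℝ) (E : ℝ × ℝ → ℝ) :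
    MoptE k l E = fiberCentered μ01 (Fset k l) E := by
  ext p
  simp only [MoptE, fiberCentered, fiberAverage, setAverage_eq, smul_eq_mul, div_eq_inv_mul]
  rfl

lemma feasSet_eq (k : ℝ × ℝ → ℝ) (l : ℝ) :
    feasSet k l = {k' | k' ∈ centeredKernelsOn μ01 μ01 (Fset k l) ∧ ‖k'‖ = 1} := by
  ext k'
  exact and_assoc.symm

lemma frequently_setIntegral_max_pos_of_Fset_ae_eq {k₀ k₁ : ℝ × ℝ → ℝ} {l : ℝ}
    {E : ℝ × ℝ → ℝ} {Ξ : Set ℝ} (h : Fset k₀ l =ᵐ[ν01] Fset k₁ l) (hsub : Ξ ⊆ XiF k₀ l)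
    (hpos : 0 < volume Ξ) (hEpos : ∀ y ∈ Ξ, 0 < ∫ x in Fsec k₀ l y, max (E (x, y)) 0 ∂μ01)
    (hEneg : ∀ y ∈ Ξ, 0 < ∫ x in Fsec k₀ l y, max (-(E (x, y))) 0 ∂μ01) :
    ∃ᵐ y ∂μ01, 0 < ∫ x in Fsec k₁ l y, max (E (x, y)) 0 ∂μ01 ∧
      0 < ∫ x in Fsec k₁ l y, max (-E (x, y)) 0 ∂μ01 := by
  have hΞ : ∃ᵐ y ∂μ01, y ∈ Ξ := by
    rw [frequently_ae_mem_iff, μ01, Measure.restrict_eq_self _ fun y hy => (hsub hy).1]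
    exact hpos.ne'
  refine (hΞ.and_eventually (ae_fiber_ae_eq h)).mono fun y ⟨hy, hyF⟩ => ?_
  exact ⟨(hEpos y hy).trans_eq (setIntegral_congr_set hyF),
    (hEneg y hy).trans_eq (setIntegral_congr_set hyF)⟩

theorem optimal_kernel_perturbation_for_mixing_general
    (k₀ : ℝ × ℝ → ℝ) (hk₀L2 : MemLp k₀ 2 ν01)
    (lam : ℂ) (e ehat : Lp ℂ 2 μ01)
    (l : ℝ)
    (Ξ' : Set ℝ) (hΞ'sub : Ξ' ⊆ XiF k₀ l) (hΞ'pos : 0 < volume Ξ')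
    (hEpos : ∀ y ∈ Ξ',
      0 < ∫ x in Fsec k₀ l y, max (Efun lam (⇑e) (⇑ehat) (x, y)) 0 ∂μ01)
    (hEneg : ∀ y ∈ Ξ',
      0 < ∫ x in Fsec k₀ l y, max (-(Efun lam (⇑e) (⇑ehat) (x, y))) 0 ∂μ01) :
    0 < (eLpNorm (MoptE k₀ l (Efun lam (⇑e) (⇑ehat))) 2 ν01).toReal ∧
    ∃ kdot : Lp ℝ 2 ν01,
      (∀ᵐ p ∂ν01, kdot p =
        MoptE k₀ l (Efun lam (⇑e) (⇑ehat)) p /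
          (eLpNorm (MoptE k₀ l (Efun lam (⇑e) (⇑ehat))) 2 ν01).toReal) ∧
      kdot ∈ feasSet k₀ l ∧
      (∀ k ∈ feasSet k₀ l,
        JobjE (Efun lam (⇑e) (⇑ehat)) kdot ≤ JobjE (Efun lam (⇑e) (⇑ehat)) k) ∧
      (∀ k ∈ feasSet k₀ l,
        (∀ k' ∈ feasSet k₀ l,
          JobjE (Efun lam (⇑e) (⇑ehat)) k ≤ JobjE (Efun lam (⇑e) (⇑ehat)) k') →
        k = kdot) := by
  set E := Efun lam (⇑e) (⇑ehat)
  obtain ⟨k₁, hk₁, hk₀₁⟩ : ∃ k₁, StronglyMeasurable k₁ ∧ k₀ =ᵐ[ν01] k₁ :=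
    ⟨_, hk₀L2.1.stronglyMeasurable_mk, hk₀L2.1.ae_eq_mk⟩
  have hF := measurableSet_Fset hk₁.measurable l
  have hFae := Fset_ae_eq hk₀₁ l
  have hE : MemLp E 2 ν01 := memLp_Efun lam (Lp.memLp e) (Lp.memLp ehat)
  have hM : MoptE k₀ l E =ᵐ[ν01] fiberCentered μ01 (Fset k₁ l) E :=
    MoptE_eq_fiberCentered k₀ l E ▸ fiberCentered_congr_ae hFae
  have hM' : MemLp (fiberCentered μ01 (Fset k₁ l) E) 2 ν01 := memLp_fiberCentered hF hE
  set m : Lp ℝ 2 ν01 := hM'.toLp _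
  have hnorm : ‖m‖ = (eLpNorm (MoptE k₀ l E) 2 ν01).toReal := by
    rw [Lp.norm_toLp, eLpNorm_congr_ae hM]
  have hm0 : m ≠ 0 := toLp_fiberCentered_ne_zero hF hE
    (frequently_setIntegral_max_pos_of_Fset_ae_eq hFae hΞ'sub hΞ'pos hEpos hEneg)
  rw [feasSet_eq, centeredKernelsOn_congr_ae hFae]
  set S := {k : Lp ℝ 2 ν01 | k ∈ centeredKernelsOn μ01 μ01 (Fset k₁ l) ∧ ‖k‖ = 1}
  have hS : ∀ k ∈ S, ‖k‖ = 1 := fun k hk => hk.2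
  have hJ : ∀ k ∈ S, JobjE E k = -⟪k, m⟫ := fun k hk =>
    integral_integral_mul_eq_neg_inner hF hE hk.1
  have hmS : ‖m‖⁻¹ • m ∈ S := ⟨Submodule.smul_mem _ _
    (toLp_fiberCentered_mem_centeredKernelsOn hF hE), norm_smul_inv_norm hm0⟩
  refine ⟨hnorm ▸ norm_pos_iff.2 hm0, ‖m‖⁻¹ • m, ?_, hmS,
    isMinOn_iff.1 (isMinOn_inv_norm_smul_of_eq_neg_inner hS hJ hmS), fun k hk hmin =>
      eq_inv_norm_smul_of_isMinOn_of_eq_neg_inner hS hJ hmS hk (isMinOn_iff.2 hmin)⟩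
  filter_upwards [Lp.coeFn_smul ‖m‖⁻¹ m, hM'.coeFn_toLp, hM] with p h₁ h₂ h₃
  rw [h₁, Pi.smul_apply, h₂, ← h₃, hnorm, smul_eq_mul, div_eq_inv_mul]

/-- Explicit formula for the unique kernel perturbation maximally
increasing the mixing rate (minimising `∫∫ k E` over the feasible set). -/
theorem optimal_kernel_perturbation_for_mixing
    (k₀ : ℝ × ℝ → ℝ) (hk₀L2 : MemLp k₀ 2 ν01)
    (hk₀nonneg : ∀ᵐ p ∂ν01, 0 ≤ k₀ p)
    (hk₀stoch : ∀ᵐ y ∂μ01, ∫ x, k₀ (x, y) ∂μ01 = 1)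
    (L₀ : Lp ℂ 2 μ01 →L[ℂ] Lp ℂ 2 μ01)
    (hL₀ : ∀ f : Lp ℂ 2 μ01, ∀ᵐ x ∂μ01, (L₀ f) x = ∫ y, (k₀ (x, y) : ℂ) * f y ∂μ01)
    (hmix : ∀ g : Lp ℂ 2 μ01, (∫ x, g x ∂μ01) = 0 →
      Filter.Tendsto (fun n : ℕ => ‖(L₀ ^ n) g‖) Filter.atTop (nhds 0))
    (L₀t : Lp ℂ 2 μ01 →L[ℂ] Lp ℂ 2 μ01)
    (hL₀t : ∀ f : Lp ℂ 2 μ01, ∀ᵐ x ∂μ01, (L₀t f) x = ∫ y, (k₀ (y, x) : ℂ) * f y ∂μ01)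
    (lam : ℂ) (e ehat : Lp ℂ 2 μ01)
    (he : L₀ e = lam • e) (hehat : L₀t ehat = lam • ehat)
    (l : ℝ) (hl0 : 0 < l) (hl1 : l < 1)
    (Ξ' : Set ℝ) (hΞ'sub : Ξ' ⊆ XiF k₀ l) (hΞ'pos : 0 < volume Ξ')
    (hEpos : ∀ y ∈ Ξ',
      0 < ∫ x in Fsec k₀ l y, max (Efun lam (⇑e) (⇑ehat) (x, y)) 0 ∂μ01)
    (hEneg : ∀ y ∈ Ξ',
      0 < ∫ x in Fsec k₀ l y, max (-(Efun lam (⇑e) (⇑ehat) (x, y))) 0 ∂μ01) :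
    0 < (eLpNorm (MoptE k₀ l (Efun lam (⇑e) (⇑ehat))) 2 ν01).toReal ∧
    ∃ kdot : Lp ℝ 2 ν01,
      (∀ᵐ p ∂ν01, kdot p =
        MoptE k₀ l (Efun lam (⇑e) (⇑ehat)) p /
          (eLpNorm (MoptE k₀ l (Efun lam (⇑e) (⇑ehat))) 2 ν01).toReal) ∧
      kdot ∈ feasSet k₀ l ∧
      (∀ k ∈ feasSet k₀ l,
        JobjE (Efun lam (⇑e) (⇑ehat)) kdot ≤ JobjE (Efun lam (⇑e) (⇑ehat)) k) ∧
      (∀ k ∈ feasSet k₀ l,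
        (∀ k' ∈ feasSet k₀ l,
          JobjE (Efun lam (⇑e) (⇑ehat)) k ≤ JobjE (Efun lam (⇑e) (⇑ehat)) k') →
        k = kdot) :=
  optimal_kernel_perturbation_for_mixing_general k₀ hk₀L2 lam e ehat l Ξ' hΞ'sub hΞ'pos hEpos hEneg
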